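/- Let T be a locally compact, second countable Hausdorff topological space, let σ be a Radon measure on T, and let λ, η : T → ℝ be continuous with η(t) ≥ 0 for all t. For t ∈ T let μ_t be the semicircle law with mean λ(t) and variance η(t) if η(t) > 0, and the Dirac measure at λ(t) if η(t) = 0. Then for every relatively compact Borel set Δ ⊆ T there exists r > 0 such that for every Borel measurable f : T → ℝ vanishing outside Δ with |f(t)| < r for all t ∈ T, the series ∑_{n=2}^∞ ∫_T f(t)^n (∫_ℝ s^{n−2} dμ_t(s)) dσ(t) converges absolutely and its sum equals ∫_T 2 f(t)² (1 − λ(t) f(t) + √((1 − λ(t) f(t))² − 4 f(t)² η(t)))^{−1} dσ(t), where the square root is the real square root and (1 − λ(t)f(t))² − 4 f(t)² η(t) > 0 for all t ∈ Δ. -/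

import Mathlib

/-!
Every `μ_t` is a probability measure carried by `[λ(t) - 2√η(t), λ(t) + 2√η(t)]`, and the
substitution `s = λ(t) + 2√η(t) u` turns it into the law `(2/π) √(1 - u²) du` on `[-1, 1]`;
this also covers the Dirac case `η(t) = 0`. Hence, for `|x| (|λ| + 2√η) < 1`, the moment
series `∑ xⁿ m_n(t)` is the geometric series integrated against `μ_t`, i.e.
`∫ (1 - x s)⁻¹ dμ_t(s)`, and the classical integral
`∫_{-1}^{1} √(1 - u²) / (a - b u) du = π / (a + √(a² - b²))` evaluates it to
`2 / (1 - λx + √((1 - λx)² - 4x²η))`. On the compact closure of `Δ` the quantity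
`|λ| + 2√η` is bounded, so for `|f| < r` small the `n`-th term is dominated by `r² 2⁻ⁿ 1_Δ`,
and dominated convergence exchanges the sum with the integral over `σ`.
-/

open MeasureTheory

/-- The semicircle law with mean `l` and variance `e`: the measure on `ℝ` with density
`s ↦ (2πe)⁻¹ √(max (4e − (s−l)², 0))` with respect to Lebesgue measure. -/
noncomputable def semicircleLaw (l e : ℝ) : Measure ℝ :=
  volume.withDensity fun s =>
    ENNReal.ofReal ((2 * Real.pi * e)⁻¹ * Real.sqrt (max (4 * e - (s - l) ^ 2) 0))

/-- The distribution at a point `t` of the free Meixner process with parameters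
`λ, η : T → ℝ`: the semicircle law with mean `λ(t)` and variance `η(t)` if `η(t) > 0`,
and the Dirac measure at `λ(t)` if `η(t) = 0`. -/
noncomputable def meixnerDist {T : Type*} [MeasurableSpace T]
    (lam eta : T → ℝ) (t : T) : Measure ℝ :=
  if eta t = 0 then Measure.dirac (lam t) else semicircleLaw (lam t) (eta t)

open Real Set

section Series

variable {α : Type*} [MeasurableSpace α] {μ : Measure α}

lemma hasSum_integral_of_norm_le_mul {E : Type*} [NormedAddCommGroup E] [NormedSpace ℝ E]
    {F : ℕ → α → E} {f : α → E} {g : α → ℝ} {C : ℕ → ℝ}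
    (hF : ∀ n, AEStronglyMeasurable (F n) μ) (hg : Integrable g μ) (hC : Summable C)
    (hle : ∀ n, ∀ᵐ a ∂μ, ‖F n a‖ ≤ C n * g a) (hf : ∀ᵐ a ∂μ, HasSum (fun n => F n a) (f a)) :
    HasSum (fun n => ∫ a, F n a ∂μ) (∫ a, f a ∂μ) :=
  hasSum_integral_of_dominated_convergence (fun n a => C n * g a) hF hle
    (ae_of_all _ fun _ => hC.mul_right _) (by simpa only [tsum_mul_right] using hg.const_mul _) hf

lemma abs_integral_pow_le [IsProbabilityMeasure μ] {X : α → ℝ} {R : ℝ}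
    (hR : ∀ᵐ a ∂μ, |X a| ≤ R) (n : ℕ) : |∫ a, X a ^ n ∂μ| ≤ R ^ n := by
  have h : ∀ᵐ a ∂μ, ‖X a ^ n‖ ≤ R ^ n := hR.mono fun a ha => by
    rw [norm_pow, Real.norm_eq_abs]; exact pow_le_pow_left₀ (abs_nonneg _) ha n
  simpa using norm_integral_le_of_norm_le_const h

lemma hasSum_pow_mul_integral_pow [IsFiniteMeasure μ] {X : α → ℝ} {R x : ℝ} (hR0 : 0 ≤ R)
    (hX : AEStronglyMeasurable X μ) (hR : ∀ᵐ a ∂μ, |X a| ≤ R) (hx : |x| * R < 1) :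
    HasSum (fun n => x ^ n * ∫ a, X a ^ n ∂μ) (∫ a, (1 - x * X a)⁻¹ ∂μ) := by
  have hxX : ∀ᵐ a ∂μ, |x * X a| ≤ |x| * R :=
    hR.mono fun a ha => by rw [abs_mul]; exact mul_le_mul_of_nonneg_left ha (abs_nonneg x)
  simp only [← integral_const_mul, ← mul_pow]
  refine hasSum_integral_of_norm_le_mul (fun n => (hX.const_mul x).pow n) (integrable_const 1)
    (summable_geometric_of_lt_one (by positivity) hx) (fun n => hxX.mono fun a ha => ?_)
    (hxX.mono fun a ha => hasSum_geometric_of_abs_lt_one (ha.trans_lt hx))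
  rw [mul_one, norm_pow, Real.norm_eq_abs]
  exact pow_le_pow_left₀ (abs_nonneg _) ha n

end Series

lemma sub_mul_pos_of_abs_lt {a b u : ℝ} (hab : |b| < a) (hu : u ∈ Icc (-1 : ℝ) 1) :
    0 < a - b * u := by
  have : |b * u| ≤ |b| := by
    rw [abs_mul]; exact mul_le_of_le_one_right (abs_nonneg b) (abs_le.2 hu)
  linarith [le_abs_self (b * u)]

lemma hasDerivAt_arcsin_div_sub_mul {a b u : ℝ} (hab : |b| < a) (hu : u ∈ Ioo (-1 : ℝ) 1) :
    HasDerivAt (fun u => arcsin ((b - a * u) / (a - b * u)))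
      (-√(a ^ 2 - b ^ 2) / (√(1 - u ^ 2) * (a - b * u))) u := by
  have hden := sub_mul_pos_of_abs_lt hab (Ioo_subset_Icc_self hu)
  have hD : 0 < a ^ 2 - b ^ 2 := sub_pos.2 (sq_lt_sq' (neg_lt_of_abs_lt hab) (lt_of_abs_lt hab))
  have hW : 0 < 1 - u ^ 2 := by nlinarith [hu.1, hu.2]
  have hg : 1 - ((b - a * u) / (a - b * u)) ^ 2
      = (a ^ 2 - b ^ 2) * (1 - u ^ 2) / (a - b * u) ^ 2 := by
    field_simp
    ring
  have hg_pos : 0 < 1 - ((b - a * u) / (a - b * u)) ^ 2 := by rw [hg]; positivity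
  have hsqrt : √(1 - ((b - a * u) / (a - b * u)) ^ 2)
      = √(a ^ 2 - b ^ 2) * √(1 - u ^ 2) / (a - b * u) := by
    rw [hg, sqrt_div' _ (sq_nonneg _), sqrt_mul hD.le, sqrt_sq hden.le]
  have hquot : HasDerivAt (fun u => (b - a * u) / (a - b * u))
      ((b ^ 2 - a ^ 2) / (a - b * u) ^ 2) u := by
    refine ((((hasDerivAt_id u).const_mul a).const_sub b).div
      (((hasDerivAt_id u).const_mul b).const_sub a) hden.ne').congr_deriv ?_
    simp only [id]
    ring
  refine ((hasDerivAt_arcsin (by nlinarith) (by nlinarith)).comp u hquot).congr_deriv ?_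
  rw [hsqrt]
  have := sq_sqrt hD.le
  field_simp
  linear_combination this

lemma hasDerivAt_primitive_sqrt_one_sub_sq_div_sub_mul {a b u : ℝ} (hab : |b| < a) (hb : b ≠ 0)
    (hu : u ∈ Ioo (-1 : ℝ) 1) :
    HasDerivAt (fun u => -√(1 - u ^ 2) / b + a / b ^ 2 * arcsin u
      + √(a ^ 2 - b ^ 2) / b ^ 2 * arcsin ((b - a * u) / (a - b * u)))
      (√(1 - u ^ 2) / (a - b * u)) u := by
  have hD : 0 < a ^ 2 - b ^ 2 := sub_pos.2 (sq_lt_sq' (neg_lt_of_abs_lt hab) (lt_of_abs_lt hab))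
  have hden := sub_mul_pos_of_abs_lt hab (Ioo_subset_Icc_self hu)
  have hW : 0 < 1 - u ^ 2 := by nlinarith [hu.1, hu.2]
  have hroot : HasDerivAt (fun u : ℝ => √(1 - u ^ 2)) (-u / √(1 - u ^ 2)) u := by
    refine (((hasDerivAt_pow 2 u).const_sub 1).sqrt hW.ne').congr_deriv ?_
    field_simp
    norm_num
  have harcsin := (hasDerivAt_arcsin (x := u) (by nlinarith) (by nlinarith)).const_mul (a / b ^ 2)
  refine (((hroot.neg.div_const b).add harcsin).add
    ((hasDerivAt_arcsin_div_sub_mul hab hu).const_mul (√(a ^ 2 - b ^ 2) / b ^ 2))).congr_deriv ?_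
  have hW' := mul_self_sqrt hW.le
  have hD' := mul_self_sqrt hD.le
  have hden' : a - u * b ≠ 0 := by linarith
  field_simp
  linear_combination -hD' - b ^ 2 * hW'

theorem integral_sqrt_one_sub_sq_div_sub_mul {a b : ℝ} (hab : |b| < a) :
    ∫ u in (-1 : ℝ)..1, √(1 - u ^ 2) / (a - b * u) = π / (a + √(a ^ 2 - b ^ 2)) := by
  have ha : 0 < a := (abs_nonneg b).trans_lt hab
  rcases eq_or_ne b 0 with rfl | hb
  · simp [intervalIntegral.integral_div, integral_sqrt_one_sub_sq, sqrt_sq ha.le]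
    field_simp
    ring
  have hD : 0 < a ^ 2 - b ^ 2 := sub_pos.2 (sq_lt_sq' (neg_lt_of_abs_lt hab) (lt_of_abs_lt hab))
  have hF_cont : ContinuousOn (fun u => -√(1 - u ^ 2) / b + a / b ^ 2 * arcsin u
      + √(a ^ 2 - b ^ 2) / b ^ 2 * arcsin ((b - a * u) / (a - b * u))) (Icc (-1) 1) := by
    have : ContinuousOn (fun u => (b - a * u) / (a - b * u)) (Icc (-1) 1) :=
      ContinuousOn.div (by fun_prop) (by fun_prop) fun u hu => (sub_mul_pos_of_abs_lt hab hu).ne'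
    have := continuous_arcsin.comp_continuousOn this
    fun_prop
  have hint : IntervalIntegrable (fun u => √(1 - u ^ 2) / (a - b * u)) volume (-1) 1 :=
    (ContinuousOn.div (by fun_prop) (by fun_prop) fun u hu =>
      (sub_mul_pos_of_abs_lt hab (by rwa [uIcc_of_le (by norm_num)] at hu)).ne').intervalIntegrable
  rw [intervalIntegral.integral_eq_sub_of_hasDeriv_right_of_le (by norm_num) hF_cont
    (fun _ hu => (hasDerivAt_primitive_sqrt_one_sub_sq_div_sub_mul hab hb hu).hasDerivWithinAt)
    hint]
  have h1 : (b - a * 1) / (a - b * 1) = -1 := by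
    rw [div_eq_iff (by linarith [le_abs_self b])]; ring
  have h2 : (b - a * -1) / (a - b * -1) = 1 := by
    rw [div_eq_iff (by linarith [neg_abs_le b])]; ring
  have hpos : 0 < a + √(a ^ 2 - b ^ 2) := by positivity
  have hD' := sq_sqrt hD.le
  simp only [h1, h2, arcsin_one, arcsin_neg]
  norm_num
  field_simp
  linear_combination (-2) * hD'

lemma sqrt_max_zero (x : ℝ) : √(max x 0) = √x := by
  rcases le_total x 0 with h | h
  · rw [max_eq_right h, sqrt_zero, sqrt_eq_zero'.2 h]
  · rw [max_eq_left h]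

section Semicircle

variable {l e : ℝ}

noncomputable def semicircleDensity (l e s : ℝ) : ℝ :=
  (2 * π * e)⁻¹ * √(max (4 * e - (s - l) ^ 2) 0)

lemma semicircleLaw_eq_withDensity (l e : ℝ) :
    semicircleLaw l e = volume.withDensity fun s => ENNReal.ofReal (semicircleDensity l e s) :=
  rfl

lemma continuous_semicircleDensity (l e : ℝ) : Continuous (semicircleDensity l e) := by
  unfold semicircleDensity; fun_prop

lemma semicircleDensity_nonneg (he : 0 ≤ e) (s : ℝ) : 0 ≤ semicircleDensity l e s := by
  unfold semicircleDensity; positivity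

lemma abs_sub_lt_of_semicircleDensity_ne_zero {s : ℝ} (h : semicircleDensity l e s ≠ 0) :
    |s - l| < 2 * √e := by
  have hpos : 0 < 4 * e - (s - l) ^ 2 := by
    by_contra! hle
    exact h (by rw [semicircleDensity, max_eq_right hle, sqrt_zero, mul_zero])
  have he : 0 ≤ e := by nlinarith [sq_nonneg (s - l)]
  refine abs_lt_of_sq_lt_sq ?_ (by positivity)
  rw [mul_pow, sq_sqrt he]
  linarith

lemma semicircleDensity_add_mul (he : 0 ≤ e) (u : ℝ) :
    semicircleDensity l e (l + 2 * √e * u) = (2 * π * e)⁻¹ * (2 * √e * √(1 - u ^ 2)) := by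
  have h : 4 * e - (l + 2 * √e * u - l) ^ 2 = 2 ^ 2 * e * (1 - u ^ 2) := by
    have := sq_sqrt he; linear_combination (-4 * u ^ 2) * this
  rw [semicircleDensity, h, sqrt_max_zero, sqrt_mul (by positivity), sqrt_mul (by positivity),
    sqrt_sq zero_le_two]

instance isFiniteMeasure_semicircleLaw (l e : ℝ) : IsFiniteMeasure (semicircleLaw l e) := by
  have hsupp : HasCompactSupport (semicircleDensity l e) :=
    HasCompactSupport.intro (isCompact_closedBall l (2 * √e)) fun s hs => by
      by_contra h
      exact hs (Metric.mem_closedBall.2 (abs_sub_lt_of_semicircleDensity_ne_zero h).le)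
  exact isFiniteMeasure_withDensity_ofReal
    ((continuous_semicircleDensity l e).integrable_of_hasCompactSupport hsupp).2

lemma ae_abs_sub_le_semicircleLaw (l e : ℝ) : ∀ᵐ s ∂semicircleLaw l e, |s - l| ≤ 2 * √e := by
  rw [semicircleLaw_eq_withDensity, ae_withDensity_iff
    (continuous_semicircleDensity l e).measurable.ennreal_ofReal]
  refine ae_of_all _ fun s hs => (abs_sub_lt_of_semicircleDensity_ne_zero fun h => hs ?_).le
  rw [h, ENNReal.ofReal_zero]

theorem integral_semicircleLaw (he : 0 < e) (g : ℝ → ℝ) :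
    ∫ s, g s ∂semicircleLaw l e
      = 2 / π * ∫ u in (-1 : ℝ)..1, √(1 - u ^ 2) * g (l + 2 * √e * u) := by
  rw [semicircleLaw_eq_withDensity, integral_withDensity_eq_integral_toReal_smul
    (continuous_semicircleDensity l e).measurable.ennreal_ofReal
    (ae_of_all _ fun _ => ENNReal.ofReal_lt_top)]
  simp only [ENNReal.toReal_ofReal (semicircleDensity_nonneg he.le _), smul_eq_mul]
  have hsupp : ∀ s ∉ Icc (l - 2 * √e) (l + 2 * √e), semicircleDensity l e s * g s = 0 := by
    intro s hs
    by_contra h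
    have := abs_sub_lt_of_semicircleDensity_ne_zero (left_ne_zero_of_mul h)
    exact hs ⟨by linarith [neg_abs_le (s - l)], by linarith [le_abs_self (s - l)]⟩
  have hsub := intervalIntegral.smul_integral_comp_add_mul (a := -1) (b := 1)
    (fun s => semicircleDensity l e s * g s) (2 * √e) l
  rw [mul_neg_one, mul_one, ← sub_eq_add_neg] at hsub
  have hse := sq_sqrt he.le
  rw [← setIntegral_eq_integral_of_forall_compl_eq_zero hsupp, integral_Icc_eq_integral_Ioc,
    ← intervalIntegral.integral_of_le (by linarith [sqrt_nonneg e]), ← hsub, smul_eq_mul,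
    ← intervalIntegral.integral_const_mul, ← intervalIntegral.integral_const_mul]
  congr 1 with u
  rw [semicircleDensity_add_mul he.le]
  field_simp
  linear_combination (√(1 - u ^ 2) * g (l + 2 * √e * u)) * hse

theorem isProbabilityMeasure_semicircleLaw (he : 0 < e) :
    IsProbabilityMeasure (semicircleLaw l e) := by
  have h := integral_semicircleLaw (l := l) he fun _ => 1
  simp only [integral_const, smul_eq_mul, mul_one, integral_sqrt_one_sub_sq] at h
  have hπ : 2 / π * (π / 2) = 1 := by field_simp
  exact ⟨by rw [← ofReal_measureReal, h, hπ, ENNReal.ofReal_one]⟩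

end Semicircle

section Meixner

variable {l e x : ℝ}

noncomputable def meixnerLaw (l e : ℝ) : Measure ℝ :=
  if e = 0 then Measure.dirac l else semicircleLaw l e

lemma meixnerDist_eq_meixnerLaw {T : Type*} [MeasurableSpace T] (lam eta : T → ℝ) (t : T) :
    meixnerDist lam eta t = meixnerLaw (lam t) (eta t) :=
  rfl

lemma isProbabilityMeasure_meixnerLaw (he : 0 ≤ e) : IsProbabilityMeasure (meixnerLaw l e) := by
  unfold meixnerLaw
  split_ifs with h
  · infer_instance
  · exact isProbabilityMeasure_semicircleLaw (he.lt_of_ne' h)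

lemma ae_abs_le_meixnerLaw (l e : ℝ) : ∀ᵐ s ∂meixnerLaw l e, |s| ≤ |l| + 2 * √e := by
  have h : ∀ᵐ s ∂meixnerLaw l e, |s - l| ≤ 2 * √e := by
    unfold meixnerLaw
    split_ifs
    · simp [ae_dirac_eq]
    · exact ae_abs_sub_le_semicircleLaw l e
  exact h.mono fun s hs => by linarith [abs_sub_abs_le_abs_sub s l]

theorem integral_meixnerLaw (he : 0 ≤ e) (g : ℝ → ℝ) :
    ∫ s, g s ∂meixnerLaw l e
      = 2 / π * ∫ u in (-1 : ℝ)..1, √(1 - u ^ 2) * g (l + 2 * √e * u) := by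
  unfold meixnerLaw
  split_ifs with h
  · subst h
    simp [intervalIntegral.integral_mul_const, integral_sqrt_one_sub_sq]
    field_simp
  · exact integral_semicircleLaw (he.lt_of_ne' h) g

theorem integral_inv_one_sub_mul_meixnerLaw (he : 0 ≤ e) (hx : |2 * x * √e| < 1 - l * x) :
    ∫ s, (1 - x * s)⁻¹ ∂meixnerLaw l e = 2 / (1 - l * x + √((1 - l * x) ^ 2 - 4 * x ^ 2 * e)) := by
  have h4 : (2 * x * √e) ^ 2 = 4 * x ^ 2 * e := by rw [mul_pow, sq_sqrt he]; ring
  have hpos : 0 < 1 - l * x + √((1 - l * x) ^ 2 - 4 * x ^ 2 * e) :=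
    add_pos_of_pos_of_nonneg ((abs_nonneg _).trans_lt hx) (sqrt_nonneg _)
  have hintegrand : ∀ u : ℝ, √(1 - u ^ 2) * (1 - x * (l + 2 * √e * u))⁻¹
      = √(1 - u ^ 2) / (1 - l * x - 2 * x * √e * u) := fun u => by
    rw [div_eq_mul_inv]; ring_nf
  simp_rw [integral_meixnerLaw he, hintegrand, integral_sqrt_one_sub_sq_div_sub_mul hx, h4]
  field_simp

lemma abs_two_mul_mul_sqrt_lt (hx : |x| * (|l| + 2 * √e) < 1) : |2 * x * √e| < 1 - l * x := by
  rw [abs_mul, abs_mul, abs_two, abs_of_nonneg (sqrt_nonneg e)]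
  nlinarith [le_abs_self (l * x), abs_mul l x]

lemma four_mul_sq_mul_lt_sq (he : 0 ≤ e) (hx : |x| * (|l| + 2 * √e) < 1) :
    4 * x ^ 2 * e < (1 - l * x) ^ 2 := by
  have hx' := abs_two_mul_mul_sqrt_lt hx
  have h := sq_lt_sq' (neg_lt_of_abs_lt hx') (lt_of_abs_lt hx')
  rwa [mul_pow, mul_pow, sq_sqrt he, show (2 : ℝ) ^ 2 = 4 by norm_num] at h

theorem hasSum_meixnerLaw (he : 0 ≤ e) (hx : |x| * (|l| + 2 * √e) < 1) :
    HasSum (fun n => x ^ (n + 2) * ∫ s, s ^ n ∂meixnerLaw l e)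
      (2 * x ^ 2 * (1 - l * x + √((1 - l * x) ^ 2 - 4 * x ^ 2 * e))⁻¹) := by
  have := isProbabilityMeasure_meixnerLaw (l := l) he
  have h := (hasSum_pow_mul_integral_pow (X := fun s => s) (by positivity)
    aestronglyMeasurable_id (ae_abs_le_meixnerLaw l e) hx).mul_left (x ^ 2)
  rw [integral_inv_one_sub_mul_meixnerLaw he (abs_two_mul_mul_sqrt_lt hx)] at h
  simpa only [pow_add, div_eq_mul_inv, mul_comm, mul_left_comm, mul_assoc] using h

lemma abs_pow_add_two_mul_integral_pow_meixnerLaw_le (he : 0 ≤ e) {q : ℝ}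
    (hx : |x| * (|l| + 2 * √e) ≤ q) (n : ℕ) :
    |x ^ (n + 2) * ∫ s, s ^ n ∂meixnerLaw l e| ≤ x ^ 2 * q ^ n := by
  have := isProbabilityMeasure_meixnerLaw (l := l) he
  calc |x ^ (n + 2) * ∫ s, s ^ n ∂meixnerLaw l e|
      ≤ |x| ^ (n + 2) * (|l| + 2 * √e) ^ n := by
        rw [abs_mul, abs_pow]
        exact mul_le_mul_of_nonneg_left (abs_integral_pow_le (ae_abs_le_meixnerLaw l e) n)
          (by positivity)
    _ = x ^ 2 * (|x| * (|l| + 2 * √e)) ^ n := by rw [mul_pow, pow_add, sq_abs]; ring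
    _ ≤ x ^ 2 * q ^ n := by gcongr

theorem continuous_integral_meixnerDist {T : Type*} [TopologicalSpace T] [MeasurableSpace T]
    {lam eta : T → ℝ} (hlam : Continuous lam) (heta : Continuous eta) (heta0 : ∀ t, 0 ≤ eta t)
    {g : ℝ → ℝ} (hg : Continuous g) : Continuous fun t => ∫ s, g s ∂meixnerDist lam eta t := by
  simp_rw [meixnerDist_eq_meixnerLaw, integral_meixnerLaw (heta0 _)]
  fun_prop

end Meixner

theorem hasSum_integral_meixnerDist {T : Type*} [TopologicalSpace T] [MeasurableSpace T]
    [OpensMeasurableSpace T] {σ : Measure T} {lam eta : T → ℝ} (hlam : Continuous lam)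
    (heta : Continuous eta) (heta0 : ∀ t, 0 ≤ eta t) {Δ : Set T} (hΔ : MeasurableSet Δ)
    (hσΔ : σ Δ ≠ ⊤) {f : T → ℝ} (hf : Measurable f) (hfΔ : ∀ t ∉ Δ, f t = 0) {r q : ℝ}
    (hfr : ∀ t, |f t| ≤ r) (hq0 : 0 ≤ q) (hq : q < 1)
    (hsmall : ∀ t ∈ Δ, |f t| * (|lam t| + 2 * √(eta t)) ≤ q) :
    HasSum (fun n => ∫ t, f t ^ (n + 2) * ∫ s, s ^ n ∂meixnerDist lam eta t ∂σ)
      (∫ t, 2 * f t ^ 2 *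
        (1 - lam t * f t + √((1 - lam t * f t) ^ 2 - 4 * f t ^ 2 * eta t))⁻¹ ∂σ) := by
  have hpt : ∀ t, HasSum (fun n => f t ^ (n + 2) * ∫ s, s ^ n ∂meixnerDist lam eta t)
      (2 * f t ^ 2 * (1 - lam t * f t + √((1 - lam t * f t) ^ 2 - 4 * f t ^ 2 * eta t))⁻¹) := by
    intro t
    by_cases ht : t ∈ Δ
    · exact hasSum_meixnerLaw (heta0 t) ((hsmall t ht).trans_lt hq)
    · simp [hfΔ t ht, hasSum_zero]
  have hbound : ∀ n t, ‖f t ^ (n + 2) * ∫ s, s ^ n ∂meixnerDist lam eta t‖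
      ≤ r ^ 2 * q ^ n * Δ.indicator 1 t := by
    intro n t
    by_cases ht : t ∈ Δ
    · rw [indicator_of_mem ht, Pi.one_apply, mul_one, Real.norm_eq_abs]
      refine (abs_pow_add_two_mul_integral_pow_meixnerLaw_le (heta0 t) (hsmall t ht) n).trans ?_
      exact mul_le_mul_of_nonneg_right
        (sq_le_sq' (neg_le_of_abs_le (hfr t)) (le_of_abs_le (hfr t))) (by positivity)
    · rw [indicator_of_notMem ht, hfΔ t ht]
      simp
  exact hasSum_integral_of_norm_le_mul
    (fun n => ((hf.pow_const _).mul (continuous_integral_meixnerDist hlam heta heta0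
      (continuous_pow n)).measurable).aestronglyMeasurable)
    ((integrable_indicator_iff hΔ).2 (integrableOn_const hσΔ))
    ((summable_geometric_of_lt_one hq0 hq).mul_left (r ^ 2))
    (fun n => ae_of_all _ (hbound n)) (ae_of_all _ hpt)

theorem stmt14_general
    {T : Type*} [TopologicalSpace T]
    [MeasurableSpace T] [BorelSpace T]
    (σ : Measure T) [σ.Regular]
    (lam eta : T → ℝ) (hlam : Continuous lam) (heta : Continuous eta)
    (heta0 : ∀ t, 0 ≤ eta t) :
    ∀ Δ : Set T, MeasurableSet Δ → IsCompact (closure Δ) →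
      ∃ r > (0 : ℝ), ∀ f : T → ℝ, Measurable f → (∀ t ∉ Δ, f t = 0) →
        (∀ t, |f t| < r) →
        (∀ t ∈ Δ, 0 < (1 - lam t * f t) ^ 2 - 4 * f t ^ 2 * eta t) ∧
        Summable (fun n : ℕ =>
          |∫ t, f t ^ (n + 2) * ∫ s, s ^ n ∂(meixnerDist lam eta t) ∂σ|) ∧
        ∑' n : ℕ, ∫ t, f t ^ (n + 2) * ∫ s, s ^ n ∂(meixnerDist lam eta t) ∂σ =
          ∫ t, 2 * f t ^ 2 *
            (1 - lam t * f t +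
              Real.sqrt ((1 - lam t * f t) ^ 2 - 4 * f t ^ 2 * eta t))⁻¹ ∂σ := by
  intro Δ hΔ hΔc
  obtain ⟨C, hC⟩ := hΔc.exists_bound_of_continuousOn
    (f := fun t => |lam t| + 2 * √(eta t)) (by fun_prop)
  set r := (2 * max C 1)⁻¹ with hr
  refine ⟨r, by positivity, fun f hf hfΔ hfr => ?_⟩
  have hsmall : ∀ t ∈ Δ, |f t| * (|lam t| + 2 * √(eta t)) ≤ 2⁻¹ := fun t ht => by
    have hCt : |lam t| + 2 * √(eta t) ≤ max C 1 :=
      (le_abs_self _).trans ((hC t (subset_closure ht)).trans (le_max_left _ _))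
    calc _ ≤ r * max C 1 := mul_le_mul (hfr t).le hCt (by positivity) (by positivity)
      _ = 2⁻¹ := by rw [hr, mul_inv, inv_mul_cancel_right₀ (by positivity)]
  have hσΔ : σ Δ ≠ ⊤ := ((measure_mono subset_closure).trans_lt hΔc.measure_lt_top).ne
  have hsum := hasSum_integral_meixnerDist hlam heta heta0 hΔ hσΔ hf hfΔ (fun t => (hfr t).le)
    (by norm_num) (by norm_num) hsmall
  exact ⟨fun t ht => sub_pos.2 (four_mul_sq_mul_lt_sq (heta0 t) (by linarith [hsmall t ht])),
    hsum.summable.abs, hsum.tsum_eq⟩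

/-- **Free cumulant transform of a free Meixner process.** For every relatively compact
Borel `Δ ⊆ T` there is `r > 0` such that for every Borel `f : T → ℝ` vanishing outside
`Δ` with `|f| < r`, the series `∑_{n≥2} ∫_T f(t)ⁿ (∫_ℝ s^{n−2} dμ_t(s)) dσ(t)` converges
absolutely and equals
`∫_T 2 f(t)² (1 − λ(t)f(t) + √((1 − λ(t)f(t))² − 4 f(t)² η(t)))⁻¹ dσ(t)`,
the expression under the (real) square root being positive on `Δ`. -/
theorem stmt14
    {T : Type*} [TopologicalSpace T] [LocallyCompactSpace T]
    [SecondCountableTopology T] [T2Space T]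
    [MeasurableSpace T] [BorelSpace T]
    (σ : Measure T) [σ.Regular]
    (lam eta : T → ℝ) (hlam : Continuous lam) (heta : Continuous eta)
    (heta0 : ∀ t, 0 ≤ eta t) :
    ∀ Δ : Set T, MeasurableSet Δ → IsCompact (closure Δ) →
      ∃ r > (0 : ℝ), ∀ f : T → ℝ, Measurable f → (∀ t ∉ Δ, f t = 0) →
        (∀ t, |f t| < r) →
        (∀ t ∈ Δ, 0 < (1 - lam t * f t) ^ 2 - 4 * f t ^ 2 * eta t) ∧
        Summable (fun n : ℕ =>
          |∫ t, f t ^ (n + 2) * ∫ s, s ^ n ∂(meixnerDist lam eta t) ∂σ|) ∧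
        ∑' n : ℕ, ∫ t, f t ^ (n + 2) * ∫ s, s ^ n ∂(meixnerDist lam eta t) ∂σ =
          ∫ t, 2 * f t ^ 2 *
            (1 - lam t * f t +
              Real.sqrt ((1 - lam t * f t) ^ 2 - 4 * f t ^ 2 * eta t))⁻¹ ∂σ :=
  stmt14_general σ lam eta hlam heta heta0
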